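/- arXiv:2403.14904 — 5 statements merged into one kernel-verified Lean document; each statement's English description precedes it below -/
import Mathlib

section
/- For all positive integers j and n, the sum S_{j,n} := ∑_{a_1+⋯+a_j=n, a_i ≥ 1} ∏_{i=1}^{j} d(a_i) satisfies S_{j,n} ≤ 2·n^{j-1/2}·(log n + 1)^{j-1}. -/
open Finset

private lemma divisors_card_le_two_sqrt_nat (m : ℕ) (hm : m ≠ 0) :
    m.divisors.card ≤ 2 * Nat.sqrt m := by
  have himg : m.divisors.image (fun d => min d (m / d)) ⊆ Icc 1 (Nat.sqrt m) := by
    intro v hv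
    simp only [mem_image] at hv
    obtain ⟨d, hd, rfl⟩ := hv
    rw [Nat.mem_divisors] at hd
    have hdpos : 0 < d := Nat.pos_of_dvd_of_pos hd.1 (Nat.pos_of_ne_zero hm)
    have hq : 0 < m / d := Nat.div_pos (Nat.le_of_dvd (Nat.pos_of_ne_zero hm) hd.1) hdpos
    rw [mem_Icc]
    refine ⟨le_min hdpos hq, ?_⟩
    rw [Nat.le_sqrt]
    calc min d (m/d) * min d (m/d) ≤ d * (m / d) :=
          Nat.mul_le_mul (min_le_left _ _) (min_le_right _ _)
      _ = m := Nat.mul_div_cancel' hd.1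
  calc m.divisors.card ≤ 2 * (m.divisors.image (fun d => min d (m / d))).card := by
        apply Finset.card_le_mul_card_image
        intro v hv
        calc (m.divisors.filter fun d => min d (m / d) = v).card
            ≤ ({v, m / v} : Finset ℕ).card := by
              apply Finset.card_le_card
              intro d hd
              rw [mem_filter, Nat.mem_divisors] at hd
              obtain ⟨⟨hdvd, _⟩, hmin⟩ := hd
              rcases min_cases d (m / d) with ⟨h1, _⟩ | ⟨h1, _⟩
              · simp [h1 ▸ hmin]
              · have : d = m / v := by
                  rw [← hmin, h1, Nat.div_div_self hdvd hm]
                simp [this]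
          _ ≤ 2 := Finset.card_insert_le _ _ |>.trans (by simp)
    _ ≤ 2 * (Icc 1 (Nat.sqrt m)).card := by
        exact Nat.mul_le_mul_left 2 (Finset.card_le_card himg)
    _ = 2 * Nat.sqrt m := by simp

private lemma divisors_card_le_two_sqrt (m : ℕ) (hm : m ≠ 0) :
    (m.divisors.card : ℝ) ≤ 2 * Real.sqrt m := by
  have h1 := divisors_card_le_two_sqrt_nat m hm
  have h2 : ((Nat.sqrt m : ℕ) : ℝ) ≤ Real.sqrt m := by
    rw [show ((Nat.sqrt m : ℕ) : ℝ) = Real.sqrt (((Nat.sqrt m : ℕ) : ℝ) ^ 2) from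
      (Real.sqrt_sq (by positivity)).symm]
    apply Real.sqrt_le_sqrt
    exact_mod_cast Nat.sqrt_le' m
  calc (m.divisors.card : ℝ) ≤ ((2 * Nat.sqrt m : ℕ) : ℝ) := by exact_mod_cast h1
    _ = 2 * ((Nat.sqrt m : ℕ) : ℝ) := by push_cast; ring
    _ ≤ 2 * Real.sqrt m := by linarith

private lemma sum_divisors_card_le (n : ℕ) :
    ∑ a ∈ Icc 1 n, (a.divisors.card : ℝ) ≤ n * (Real.log n + 1) := by
  have key : ∑ a ∈ Icc 1 n, a.divisors.card = ∑ k ∈ Icc 1 n, n / k := by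
    have h1 : ∀ a ∈ Icc 1 n, a.divisors = (Icc 1 n).filter (· ∣ a) := by
      intro a ha
      rw [mem_Icc] at ha
      ext k
      rw [Nat.mem_divisors, mem_filter, mem_Icc]
      constructor
      · rintro ⟨hk, hane⟩
        exact ⟨⟨Nat.pos_of_dvd_of_pos hk (Nat.pos_of_ne_zero hane),
          (Nat.le_of_dvd (Nat.pos_of_ne_zero hane) hk).trans ha.2⟩, hk⟩
      · rintro ⟨_, hk⟩
        exact ⟨hk, by omega⟩
    calc ∑ a ∈ Icc 1 n, a.divisors.card
        = ∑ a ∈ Icc 1 n, ∑ k ∈ Icc 1 n, if k ∣ a then 1 else 0 := by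
          refine Finset.sum_congr rfl fun a ha => ?_
          rw [h1 a ha, Finset.card_filter]
      _ = ∑ k ∈ Icc 1 n, ∑ a ∈ Icc 1 n, if k ∣ a then 1 else 0 := Finset.sum_comm
      _ = ∑ k ∈ Icc 1 n, n / k := by
          refine Finset.sum_congr rfl fun k _ => ?_
          rw [← Finset.card_filter]
          have : Icc 1 n = Ioc 0 n := rfl
          rw [this, Nat.Ioc_filter_dvd_card_eq_div]
  calc ∑ a ∈ Icc 1 n, (a.divisors.card : ℝ) = ((∑ a ∈ Icc 1 n, a.divisors.card : ℕ) : ℝ) := by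
        push_cast; ring
    _ = ((∑ k ∈ Icc 1 n, n / k : ℕ) : ℝ) := by rw [key]
    _ = ∑ k ∈ Icc 1 n, ((n / k : ℕ) : ℝ) := by push_cast; ring
    _ ≤ ∑ k ∈ Icc 1 n, (n : ℝ) / k := Finset.sum_le_sum fun k _ => Nat.cast_div_le
    _ = n * ∑ k ∈ Icc 1 n, (k : ℝ)⁻¹ := by rw [Finset.mul_sum]; simp [div_eq_mul_inv]
    _ = n * (harmonic n : ℝ) := by rw [harmonic_eq_sum_Icc]; push_cast; ring
    _ ≤ n * (1 + Real.log n) := by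
        gcongr
        exact_mod_cast harmonic_le_one_add_log n
    _ = n * (Real.log n + 1) := by ring

set_option maxHeartbeats 1000000 in
/-- For positive integers `j` and `n`,
`S_{j,n} = ∑_{a₁+⋯+a_j=n, aᵢ ≥ 1} ∏ d(aᵢ) ≤ 2 n^{j-1/2} (log n + 1)^{j-1}`. -/
theorem sum_prod_divisor_count_le (j n : ℕ) (hj : 0 < j) (hn : 0 < n) :
    (∑ f ∈ (Fintype.piFinset fun _ : Fin j => Finset.Icc 1 n).filter
        (fun f => ∑ i, f i = n),
      ∏ i, ((f i).divisors.card : ℝ))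
      ≤ 2 * (n : ℝ) ^ ((j : ℝ) - 1/2) * (Real.log n + 1) ^ (j - 1) := by
  obtain ⟨k, rfl⟩ : ∃ k, j = k + 1 := ⟨j - 1, by omega⟩
  set L : ℝ := Real.log n + 1 with hLdef
  have hL : 0 ≤ L := by
    have : 0 ≤ Real.log n := Real.log_natCast_nonneg n
    linarith
  set T := (Fintype.piFinset fun _ : Fin (k+1) => Finset.Icc 1 n).filter
        (fun f => ∑ i, f i = n) with hT
  -- Step 1: bound the last factor
  have step1 : (∑ f ∈ T, ∏ i, ((f i).divisors.card : ℝ))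
      ≤ 2 * Real.sqrt n * ∑ f ∈ T, ∏ i : Fin k, ((f i.castSucc).divisors.card : ℝ) := by
    rw [Finset.mul_sum]
    refine Finset.sum_le_sum fun f hf => ?_
    rw [Fin.prod_univ_castSucc, mul_comm]
    have hfmem : f ∈ Fintype.piFinset fun _ : Fin (k+1) => Finset.Icc 1 n :=
      (Finset.mem_filter.mp hf).1
    have hlast : f (Fin.last k) ∈ Icc 1 n := Fintype.mem_piFinset.mp hfmem _
    rw [mem_Icc] at hlast
    have hb : ((f (Fin.last k)).divisors.card : ℝ) ≤ 2 * Real.sqrt n := by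
      refine (divisors_card_le_two_sqrt _ (by omega)).trans ?_
      have : Real.sqrt (f (Fin.last k)) ≤ Real.sqrt n := by
        apply Real.sqrt_le_sqrt; exact_mod_cast hlast.2
      linarith
    have hprod : 0 ≤ ∏ i : Fin k, ((f i.castSucc).divisors.card : ℝ) :=
      Finset.prod_nonneg fun i _ => by positivity
    exact mul_le_mul_of_nonneg_right hb hprod
  -- Step 2: drop the constraint
  have step2 : (∑ f ∈ T, ∏ i : Fin k, ((f i.castSucc).divisors.card : ℝ))
      ≤ ((n : ℝ) * L) ^ k := by
    have hinj : ∀ f ∈ T, ∀ g ∈ T,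
        (fun i : Fin k => f i.castSucc) = (fun i : Fin k => g i.castSucc) → f = g := by
      intro f hf g hg h
      have hfs : ∑ i, f i = n := (Finset.mem_filter.mp hf).2
      have hgs : ∑ i, g i = n := (Finset.mem_filter.mp hg).2
      rw [Fin.sum_univ_castSucc] at hfs hgs
      have hsum : ∑ i : Fin k, f i.castSucc = ∑ i : Fin k, g i.castSucc := by
        exact Finset.sum_congr rfl fun i _ => congrFun h i
      have hlast : f (Fin.last k) = g (Fin.last k) := by omega
      funext i
      refine Fin.lastCases hlast (fun i => congrFun h i) i
    calc (∑ f ∈ T, ∏ i : Fin k, ((f i.castSucc).divisors.card : ℝ))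
        = ∑ h ∈ T.image (fun f => fun i : Fin k => f i.castSucc),
            ∏ i : Fin k, ((h i).divisors.card : ℝ) :=
          (Finset.sum_image (f := fun h => ∏ i : Fin k, ((h i).divisors.card : ℝ)) hinj).symm
      _ ≤ ∑ h ∈ Fintype.piFinset (fun _ : Fin k => Finset.Icc 1 n),
            ∏ i : Fin k, ((h i).divisors.card : ℝ) := by
          apply Finset.sum_le_sum_of_subset_of_nonneg
          · intro h hh
            rw [Finset.mem_image] at hh
            obtain ⟨f, hf, rfl⟩ := hh
            rw [Fintype.mem_piFinset]
            intro i
            exact Fintype.mem_piFinset.mp (Finset.mem_filter.mp hf).1 _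
          · intro h _ _
            exact Finset.prod_nonneg fun i _ => by positivity
      _ = ∏ i : Fin k, ∑ a ∈ Icc 1 n, ((a).divisors.card : ℝ) :=
          (Finset.prod_univ_sum (fun _ : Fin k => Finset.Icc 1 n)
            (fun _ a => ((a).divisors.card : ℝ))).symm
      _ = (∑ a ∈ Icc 1 n, ((a).divisors.card : ℝ)) ^ k := by
          rw [Finset.prod_const, Finset.card_univ, Fintype.card_fin]
      _ ≤ ((n : ℝ) * L) ^ k := by
          apply pow_le_pow_left₀
          · exact Finset.sum_nonneg fun a _ => by positivity
          · exact sum_divisors_card_le n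
  -- Combine
  have hrw : (n : ℝ) ^ ((((k : ℕ) + 1 : ℕ) : ℝ) - 1/2) = (n : ℝ) ^ k * Real.sqrt n := by
    have he : ((((k : ℕ) + 1 : ℕ) : ℝ)) - 1/2 = (k : ℝ) + 1/2 := by push_cast; ring
    rw [he, Real.rpow_add (by exact_mod_cast hn), Real.rpow_natCast,
      Real.sqrt_eq_rpow]
  calc (∑ f ∈ T, ∏ i, ((f i).divisors.card : ℝ))
      ≤ 2 * Real.sqrt n * ((n : ℝ) * L) ^ k := le_trans step1 (by
        have h2 : (0:ℝ) ≤ 2 * Real.sqrt n := by positivity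
        exact mul_le_mul_of_nonneg_left step2 h2)
    _ = 2 * ((n : ℝ) ^ k * Real.sqrt n) * L ^ k := by rw [mul_pow]; ring
    _ = 2 * (n : ℝ) ^ ((((k : ℕ) + 1 : ℕ) : ℝ) - 1/2) * L ^ (k + 1 - 1) := by
        rw [hrw]; norm_num
end

section
/- Let N be a positive integer and b an integer not divisible by N, and let ζ_N = e^{2πi/N}. Then |1/2 · (1+ζ_N^b)/(1-ζ_N^b)| ≤ N/4. -/
open Complex

lemma abs_one_sub_exp_sq (θ : ℝ) :
    ‖1 - Complex.exp (θ * Complex.I)‖ ^ 2 = 2 - 2 * Real.cos θ := by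
  rw [Complex.sq_norm, Complex.normSq_apply]
  simp only [Complex.sub_re, Complex.sub_im, Complex.one_re, Complex.one_im,
    Complex.exp_ofReal_mul_I_re, Complex.exp_ofReal_mul_I_im]
  nlinarith [Real.sin_sq_add_cos_sq θ]

/-- For a positive integer `N` and an integer `b` not divisible by `N`,
with `ζ_N = e^{2πi/N}`, we have `|1/2 * (1+ζ_N^b)/(1-ζ_N^b)| ≤ N/4`. -/
theorem abs_half_one_add_zeta_div_one_sub_zeta_le (N : ℕ) (hN : 0 < N) (b : ℤ)
    (hb : ¬ (N : ℤ) ∣ b) :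
    ‖(1/2 : ℂ) * (1 + Complex.exp (2 * Real.pi * Complex.I / N) ^ b) /
        (1 - Complex.exp (2 * Real.pi * Complex.I / N) ^ b)‖ ≤ (N : ℝ) / 4 := by
  have hNR : (0:ℝ) < N := by exact_mod_cast hN
  have hNC : (N:ℂ) ≠ 0 := by exact_mod_cast hNR.ne'
  set a : ℤ := b % N with ha_def
  have ha0 : 0 < a := by
    rcases (Int.emod_nonneg b (by exact_mod_cast hN.ne' : (N:ℤ) ≠ 0)).lt_or_eq with h | h
    · exact h
    · exact absurd (Int.dvd_of_emod_eq_zero h.symm) hb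
  have haN : a < N := Int.emod_lt_of_pos b (by exact_mod_cast hN)
  set θ : ℝ := 2 * Real.pi * a / N with hθ_def
  have hz : Complex.exp (2 * Real.pi * Complex.I / N) ^ b =
      Complex.exp ((θ : ℝ) * Complex.I) := by
    rw [← Complex.exp_int_mul]
    have hsplit : (b : ℂ) * (2 * Real.pi * Complex.I / N) =
        (θ : ℝ) * Complex.I + ((b / N : ℤ) : ℂ) * (2 * Real.pi * Complex.I) := by
      have hb_eq : (b : ℂ) = (N : ℂ) * ((b / N : ℤ) : ℂ) + ((a : ℤ) : ℂ) := by
        have h : b = (N : ℤ) * (b / N) + a := by rw [ha_def]; have := Int.mul_ediv_add_emod b (N : ℤ); linarith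
        exact_mod_cast congrArg (fun n : ℤ => (n : ℂ)) h
      rw [hθ_def, hb_eq]
      push_cast
      field_simp
      ring
    rw [hsplit, Complex.exp_add, Complex.exp_int_mul_two_pi_mul_I, mul_one]
  rw [hz]
  set z : ℂ := Complex.exp ((θ : ℝ) * Complex.I) with hzdef
  have hkey : (4:ℝ) / N ≤ ‖1 - z‖ := by
    set c : ℤ := if 2 * a ≤ N then a else a - N with hc_def
    have hc1 : 1 ≤ |c| := by
      rw [hc_def]; split_ifs with h
      · rw [abs_of_pos ha0]; omega
      · rw [abs_of_neg (by omega)]; omega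
    have hc2 : 2 * |c| ≤ N := by
      rw [hc_def]; split_ifs with h
      · rwa [abs_of_pos ha0]
      · rw [abs_of_neg (by omega)]; omega
    have hcos : Real.cos θ = Real.cos (2 * Real.pi * c / N) := by
      rw [hc_def]; split_ifs with h
      · rfl
      · have he : θ = 2 * Real.pi * ((a:ℝ) - N) / N + 2 * Real.pi := by
          rw [hθ_def]; field_simp; ring
        rw [he, Real.cos_add_two_pi]; push_cast; ring_nf
    set x : ℝ := 2 * Real.pi * c / N with hx_def
    have hcabs1 : (1:ℝ) ≤ |(c:ℝ)| := by
      rw [← Int.cast_abs]; exact_mod_cast hc1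
    have hcabs2 : (2:ℝ) * |(c:ℝ)| ≤ N := by
      rw [← Int.cast_abs]; exact_mod_cast hc2
    have hxabs : |x| ≤ Real.pi := by
      rw [hx_def, abs_div, abs_of_pos hNR, div_le_iff₀ hNR]
      have he : |2 * Real.pi * (c:ℝ)| = 2 * Real.pi * |(c:ℝ)| := by
        rw [abs_mul, abs_of_pos (by positivity : (0:ℝ) < 2 * Real.pi)]
      rw [he]
      nlinarith [Real.pi_pos]
    have hcosx : Real.cos x ≤ 1 - 2 / Real.pi ^ 2 * x ^ 2 := Real.cos_le_one_sub_mul_cos_sq hxabs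
    have hx2 : (16:ℝ) / N ^ 2 ≤ 2 / Real.pi ^ 2 * x ^ 2 * 2 := by
      have he : 2 / Real.pi ^ 2 * x ^ 2 * 2 = 16 * (c:ℝ) ^ 2 / N ^ 2 := by
        rw [hx_def]; field_simp; ring
      have hc2' : (1:ℝ) ≤ (c:ℝ) ^ 2 := by
        nlinarith [hcabs1, _root_.sq_abs ((c:ℝ)), abs_nonneg ((c:ℝ))]
      rw [he, div_le_div_iff₀ (by positivity) (by positivity)]
      nlinarith [hc2', hNR]
    have habs2 : ‖1 - z‖ ^ 2 = 2 - 2 * Real.cos θ := abs_one_sub_exp_sq θ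
    have hge : (4 / (N:ℝ)) ^ 2 ≤ ‖1 - z‖ ^ 2 := by
      rw [habs2, hcos]
      have he : (4 / (N:ℝ)) ^ 2 = 16 / N ^ 2 := by ring
      rw [he]
      nlinarith [hcosx, hx2]
    exact (pow_le_pow_iff_left₀ (by positivity) (norm_nonneg _) two_ne_zero).mp hge
  have hnum : ‖(1/2 : ℂ) * (1 + z)‖ ≤ 1 := by
    rw [norm_mul]
    have h1 : ‖1 + z‖ ≤ 2 := by
      calc ‖1 + z‖ ≤ ‖(1:ℂ)‖ + ‖z‖ := norm_add_le _ _
        _ = 2 := by rw [hzdef, Complex.norm_exp_ofReal_mul_I, norm_one]; norm_num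
    have h2 : ‖(1/2 : ℂ)‖ = 1/2 := by simp
    rw [h2]; linarith
  rw [norm_div]
  calc ‖(1/2 : ℂ) * (1 + z)‖ / ‖1 - z‖
      ≤ 1 / (4 / N) := div_le_div₀ (by norm_num) hnum (by positivity) hkey
    _ = (N:ℝ) / 4 := by field_simp
end

section
/- Let m be a positive integer, w a positive divisor of a positive integer N, and 0 ≤ u ≤ e^{-π√3} a real number. Let (c_n)_{n≥1} be nonnegative reals with c_n ≤ max{1, (n/w)^{24m}} for all n. Then for every integer B ≥ 5mw, ∑_{n=B}^{∞} c_n·u^{n/w} ≤ 230.8·w·u^{B/w}·(B/w)^{24m+1}. -/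
set_option maxHeartbeats 2000000 in
/-- Tail-sum estimate: with `m ≥ 1`, `w ∣ N` positive, `0 ≤ u ≤ e^{-π√3}` and
`c_n ≤ max{1, (n/w)^{24m}}` nonnegative, for every integer `B ≥ 5mw`,
`∑_{n=B}^∞ c_n u^{n/w} ≤ 230.8 w u^{B/w} (B/w)^{24m+1}`. -/
theorem tail_sum_le_large_B (m w N : ℕ) (hm : 0 < m) (hw : 0 < w) (hN : 0 < N)
    (hwN : w ∣ N) (u : ℝ) (hu0 : 0 ≤ u) (hu : u ≤ Real.exp (-(Real.pi * Real.sqrt 3)))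
    (c : ℕ → ℝ) (hc0 : ∀ n, 1 ≤ n → 0 ≤ c n)
    (hc : ∀ n, 1 ≤ n → c n ≤ max 1 (((n : ℝ) / (w : ℝ)) ^ (24 * m)))
    (B : ℕ) (hB : 5 * m * w ≤ B) :
    (∑' k : ℕ, c (B + k) * u ^ (((B + k : ℕ) : ℝ) / (w : ℝ)))
      ≤ 230.8 * (w : ℝ) * u ^ ((B : ℝ) / (w : ℝ)) * ((B : ℝ) / (w : ℝ)) ^ (24 * m + 1) := by
  have hwR : (0:ℝ) < w := by exact_mod_cast hw
  have hw1 : (1:ℝ) ≤ w := by exact_mod_cast hw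
  have hm1 : (1:ℝ) ≤ m := by exact_mod_cast hm
  have hBR5 : 5 * (m:ℝ) * w ≤ B := by exact_mod_cast hB
  have hBpos : (0:ℝ) < B := by nlinarith
  have hwB : (w:ℝ) ≤ B := by nlinarith
  have hB1 : 1 ≤ B := by exact_mod_cast Nat.one_le_cast.mpr (by exact_mod_cast hBpos)
  set x : ℝ := (B:ℝ) / w with hxdef
  have hx5 : (5:ℝ) ≤ x := by
    rw [hxdef, le_div_iff₀ hwR]; nlinarith
  have hx1 : (1:ℝ) ≤ x := by linarith
  have hxpos : (0:ℝ) < x := by linarith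
  -- bounds on π√3
  have hs3lo : (1.732:ℝ) ≤ Real.sqrt 3 := by
    rw [show (1.732:ℝ) = Real.sqrt (1.732^2) by
      rw [Real.sqrt_sq]; norm_num]
    exact Real.sqrt_le_sqrt (by norm_num)
  have hs3hi : Real.sqrt 3 ≤ (1.74:ℝ) := by
    rw [show (1.74:ℝ) = Real.sqrt (1.74^2) by
      rw [Real.sqrt_sq]; norm_num]
    exact Real.sqrt_le_sqrt (by norm_num)
  have hpilo := Real.pi_gt_d6
  have hpihi := Real.pi_lt_d2
  have hps3lo : (5.44:ℝ) ≤ Real.pi * Real.sqrt 3 := by nlinarith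
  have hps3hi : Real.pi * Real.sqrt 3 ≤ (5.49:ℝ) := by nlinarith
  -- the case u = 0
  rcases eq_or_lt_of_le hu0 with h0 | hupos
  · rw [← h0]
    have hz : ∀ k : ℕ, c (B + k) * (0:ℝ) ^ (((B + k : ℕ) : ℝ) / (w : ℝ)) = 0 := by
      intro k
      have hnk : (0:ℝ) < ((B + k : ℕ) : ℝ) := by
        push_cast
        have : (0:ℝ) ≤ (k:ℝ) := Nat.cast_nonneg k
        linarith
      rw [Real.zero_rpow (ne_of_gt (div_pos hnk hwR))]
      ring
    have hzB : (0:ℝ) ^ ((B:ℝ) / (w:ℝ)) = 0 :=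
      Real.zero_rpow (ne_of_gt (div_pos hBpos hwR))
    rw [show (∑' k : ℕ, c (B + k) * (0:ℝ) ^ (((B + k : ℕ) : ℝ) / (w : ℝ))) = 0 from
      (tsum_congr hz).trans tsum_zero, hzB]
    norm_num
  -- main case 0 < u
  set t : ℝ := (Real.pi * Real.sqrt 3 - 24/5) / w with htdef
  have ht_lo : 0.64 / w ≤ t := by
    rw [htdef]; gcongr; linarith
  have ht_hi : t ≤ 0.69 := by
    rw [htdef, div_le_iff₀ hwR]; nlinarith
  have htpos : 0 < t := lt_of_lt_of_le (by positivity) ht_lo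
  set r : ℝ := Real.exp (-t) with hrdef
  have hr0 : 0 < r := Real.exp_pos _
  have hr1 : r < 1 := by
    rw [hrdef, Real.exp_lt_one_iff]; linarith
  set T : ℝ := x ^ (24 * m) * u ^ ((B:ℝ) / (w:ℝ)) with hTdef
  have hT0 : 0 ≤ T := by positivity
  -- termwise bound
  have key : ∀ k : ℕ, c (B + k) * u ^ (((B + k : ℕ) : ℝ) / (w : ℝ)) ≤ T * r ^ k := by
    intro k
    have hn1 : 1 ≤ B + k := le_trans hB1 (Nat.le_add_right B k)
    have hk0 : (0:ℝ) ≤ (k:ℝ) := Nat.cast_nonneg k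
    have hnw : (1:ℝ) ≤ ((B + k : ℕ) : ℝ) / w := by
      rw [le_div_iff₀ hwR]
      push_cast
      linarith
    have hcn : c (B + k) ≤ (((B + k : ℕ) : ℝ) / w) ^ (24 * m) := by
      refine (hc _ hn1).trans_eq (max_eq_right ?_)
      exact one_le_pow₀ hnw
    have hupow : 0 ≤ u ^ (((B + k : ℕ) : ℝ) / (w : ℝ)) := Real.rpow_nonneg hu0 _
    -- split the base
    have hbase : ((B + k : ℕ) : ℝ) / w = x * (1 + (k:ℝ) / B) := by
      rw [hxdef]
      push_cast
      field_simp
    have hIb : (1 + (k:ℝ) / B) ≤ Real.exp ((k:ℝ) / B) := by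
      have := Real.add_one_le_exp ((k:ℝ) / B)
      linarith
    have hkB : (k:ℝ) / B * (24 * m) ≤ 24 / 5 * ((k:ℝ) / w) := by
      rw [div_mul_eq_mul_div, ← mul_div_assoc, div_le_div_iff₀ hBpos hwR]
      nlinarith [mul_le_mul_of_nonneg_left hBR5 hk0]
    have hIb2 : (1 + (k:ℝ) / B) ^ (24 * m) ≤ Real.exp (24 / 5 * ((k:ℝ) / w)) := by
      calc (1 + (k:ℝ) / B) ^ (24 * m) ≤ Real.exp ((k:ℝ) / B) ^ (24 * m) := by
            gcongr
        _ = Real.exp ((k:ℝ) / B * (24 * m)) := by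
            rw [← Real.exp_nat_mul]
            congr 1
            push_cast
            ring
        _ ≤ Real.exp (24 / 5 * ((k:ℝ) / w)) := Real.exp_le_exp.mpr hkB
    have hpow1 : (((B + k : ℕ) : ℝ) / w) ^ (24 * m)
        ≤ x ^ (24 * m) * Real.exp (24 / 5 * ((k:ℝ) / w)) := by
      rw [hbase, mul_pow]
      exact mul_le_mul_of_nonneg_left hIb2 (by positivity)
    -- split the power of u
    have hsplit : u ^ (((B + k : ℕ) : ℝ) / (w : ℝ))
        = u ^ ((B:ℝ) / w) * u ^ ((k:ℝ) / w) := by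
      rw [← Real.rpow_add hupos]
      congr 1
      push_cast
      ring
    have huk : u ^ ((k:ℝ) / w) ≤ Real.exp (-(Real.pi * Real.sqrt 3) * ((k:ℝ) / w)) := by
      calc u ^ ((k:ℝ) / w) ≤ (Real.exp (-(Real.pi * Real.sqrt 3))) ^ ((k:ℝ) / w) := by
            gcongr
        _ = Real.exp (-(Real.pi * Real.sqrt 3) * ((k:ℝ) / w)) := (Real.exp_mul _ _).symm
    have hb0 : (0:ℝ) ≤ u ^ ((B:ℝ) / w) := Real.rpow_nonneg hu0 _
    have hk0' : (0:ℝ) ≤ u ^ ((k:ℝ) / w) := Real.rpow_nonneg hu0 _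
    have hcomb : c (B + k) * u ^ (((B + k : ℕ) : ℝ) / (w : ℝ))
        ≤ (x ^ (24 * m) * Real.exp (24 / 5 * ((k:ℝ) / w)))
          * (u ^ ((B:ℝ) / w) * Real.exp (-(Real.pi * Real.sqrt 3) * ((k:ℝ) / w))) := by
      have h1 : c (B + k) * u ^ (((B + k : ℕ) : ℝ) / (w : ℝ))
          ≤ (((B + k : ℕ) : ℝ) / w) ^ (24 * m) * u ^ (((B + k : ℕ) : ℝ) / (w : ℝ)) :=
        mul_le_mul_of_nonneg_right hcn hupow
      refine h1.trans ?_
      rw [hsplit]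
      have h3 : u ^ ((B:ℝ) / w) * u ^ ((k:ℝ) / w)
          ≤ u ^ ((B:ℝ) / w) * Real.exp (-(Real.pi * Real.sqrt 3) * ((k:ℝ) / w)) :=
        mul_le_mul_of_nonneg_left huk hb0
      exact mul_le_mul hpow1 h3 (by positivity) (by positivity)
    refine hcomb.trans_eq ?_
    have hrk : r ^ k = Real.exp ((k:ℝ) * -t) := (Real.exp_nat_mul (-t) k).symm
    have hee : Real.exp (24 / 5 * ((k:ℝ) / w)) * Real.exp (-(Real.pi * Real.sqrt 3) * ((k:ℝ) / w))
        = r ^ k := by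
      rw [hrk, ← Real.exp_add]
      congr 1
      rw [htdef]
      field_simp
      ring
    calc (x ^ (24 * m) * Real.exp (24 / 5 * ((k:ℝ) / w)))
          * (u ^ ((B:ℝ) / w) * Real.exp (-(Real.pi * Real.sqrt 3) * ((k:ℝ) / w)))
        = (x ^ (24 * m) * u ^ ((B:ℝ) / w))
          * (Real.exp (24 / 5 * ((k:ℝ) / w))
            * Real.exp (-(Real.pi * Real.sqrt 3) * ((k:ℝ) / w))) := by ring
      _ = T * r ^ k := by rw [hee, hTdef]
  -- summability and sum of the geometric majorant
  have hgs : Summable (fun k : ℕ => T * r ^ k) :=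
    (summable_geometric_of_lt_one hr0.le hr1).mul_left T
  have hnn : ∀ k : ℕ, 0 ≤ c (B + k) * u ^ (((B + k : ℕ) : ℝ) / (w : ℝ)) := fun k =>
    mul_nonneg (hc0 _ (le_trans hB1 (Nat.le_add_right B k))) (Real.rpow_nonneg hu0 _)
  have hsum : Summable (fun k : ℕ => c (B + k) * u ^ (((B + k : ℕ) : ℝ) / (w : ℝ))) :=
    Summable.of_nonneg_of_le hnn key hgs
  have hle : (∑' k : ℕ, c (B + k) * u ^ (((B + k : ℕ) : ℝ) / (w : ℝ)))
      ≤ ∑' k : ℕ, T * r ^ k := Summable.tsum_le_tsum key hsum hgs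
  rw [tsum_mul_left, tsum_geometric_of_lt_one hr0.le hr1] at hle
  refine hle.trans ?_
  -- numeric finish: T * (1-r)⁻¹ ≤ 230.8 * w * u^{B/w} * x^{24m+1}
  have h1mr : 0.32 / w ≤ 1 - r := by
    have hexp := Real.add_one_le_exp t
    have hrt : r * (t + 1) ≤ 1 := by
      have := mul_le_mul_of_nonneg_left hexp hr0.le
      rwa [hrdef, ← Real.exp_add, neg_add_cancel, Real.exp_zero] at this
    have hrhalf : (1:ℝ)/2 ≤ r := by
      rw [hrdef]
      have h2 : Real.exp (-Real.log 2) = 1/2 := by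
        rw [Real.exp_neg, Real.exp_log (by norm_num)]
        norm_num
      rw [← h2]
      apply Real.exp_le_exp.mpr
      have := Real.log_two_gt_d9
      linarith
    have htr : t * r ≤ 1 - r := by nlinarith
    have h5 : 0.32 / w ≤ t * r := by
      calc (0.32:ℝ) / w = 0.64 / w * (1/2) := by ring
        _ ≤ t * r := mul_le_mul ht_lo hrhalf (by norm_num) htpos.le
    linarith
  have h1mrpos : (0:ℝ) < 1 - r := lt_of_lt_of_le (by positivity) h1mr
  have hinv : (1 - r)⁻¹ ≤ w / 0.32 := by
    rw [inv_le_comm₀ h1mrpos (by positivity), inv_div]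
    exact h1mr
  calc T * (1 - r)⁻¹ ≤ T * (w / 0.32) := mul_le_mul_of_nonneg_left hinv hT0
    _ ≤ 230.8 * w * u ^ ((B:ℝ) / (w:ℝ)) * x ^ (24 * m + 1) := by
        rw [hTdef, pow_succ]
        have hws : (w:ℝ) / 0.32 ≤ 230.8 * w * x := by
          rw [show (w:ℝ) / 0.32 = 3.125 * w by ring]
          nlinarith [mul_le_mul_of_nonneg_left hx5 hwR.le]
        calc x ^ (24 * m) * u ^ ((B:ℝ) / w) * (w / 0.32)
            ≤ x ^ (24 * m) * u ^ ((B:ℝ) / w) * (230.8 * w * x) :=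
              mul_le_mul_of_nonneg_left hws (by positivity)
          _ = 230.8 * w * u ^ ((B:ℝ) / w) * (x ^ (24 * m) * x) := by ring
end

section
/- Let m be a positive integer, w a positive divisor of a positive integer N, and 0 ≤ u ≤ e^{-π√3}. Let (c_n)_{n≥1} be nonnegative reals with c_n ≤ max{1, (n/w)^{24m}}. Then for every integer B with mw ≤ B ≤ 5mw, ∑_{n=B}^{∞} c_n·u^{n/w} ≤ 231.6·w·u^{B/w}·(5m)^{24m+1}. -/
private lemma aux_numeric (d w mm : ℝ) (hd : (0.64:ℝ) ≤ d) (hw : 1 ≤ w) (hm : 1 ≤ mm) :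
    w + d ≤ 231.6 * w * (5 * mm) * d := by
  nlinarith [mul_le_mul hw hm zero_le_one (by linarith : (0:ℝ) ≤ w),
    mul_le_mul (le_refl (w*mm)) hd (by norm_num) (by nlinarith : (0:ℝ) ≤ w*mm)]

/-- Tail-sum estimate: with `m ≥ 1`, `w ∣ N` positive, `0 ≤ u ≤ e^{-π√3}` and
`c_n ≤ max{1, (n/w)^{24m}}` nonnegative, for every integer `B` with `mw ≤ B ≤ 5mw`,
`∑_{n=B}^∞ c_n u^{n/w} ≤ 231.6 w u^{B/w} (5m)^{24m+1}`. -/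
theorem tail_sum_le_small_B (m w N : ℕ) (hm : 0 < m) (hw : 0 < w) (hN : 0 < N)
    (hwN : w ∣ N) (u : ℝ) (hu0 : 0 ≤ u) (hu : u ≤ Real.exp (-(Real.pi * Real.sqrt 3)))
    (c : ℕ → ℝ) (hc0 : ∀ n, 1 ≤ n → 0 ≤ c n)
    (hc : ∀ n, 1 ≤ n → c n ≤ max 1 (((n : ℝ) / (w : ℝ)) ^ (24 * m)))
    (B : ℕ) (hB1 : m * w ≤ B) (hB2 : B ≤ 5 * m * w) :
    (∑' k : ℕ, c (B + k) * u ^ (((B + k : ℕ) : ℝ) / (w : ℝ)))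
      ≤ 231.6 * (w : ℝ) * u ^ ((B : ℝ) / (w : ℝ)) * ((5 * m : ℝ)) ^ (24 * m + 1) := by
  have hwpos : (0:ℝ) < w := by exact_mod_cast hw
  have hw1 : (1:ℝ) ≤ w := by exact_mod_cast hw
  have hm1 : (1:ℝ) ≤ m := by exact_mod_cast hm
  have hB0 : 1 ≤ B := le_trans (Nat.one_le_iff_ne_zero.mpr (by positivity)) hB1
  have hBr : (1:ℝ) ≤ B := by exact_mod_cast hB0
  have hsqrt3 : (1.732:ℝ) ≤ Real.sqrt 3 := by
    rw [show (1.732:ℝ) = Real.sqrt (1.732^2) from (Real.sqrt_sq (by norm_num)).symm]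
    exact Real.sqrt_le_sqrt (by norm_num)
  have hpi : (3.1415:ℝ) ≤ Real.pi := by linarith [Real.pi_gt_d6]
  have hL3 : (5.44:ℝ) ≤ Real.pi * Real.sqrt 3 := by nlinarith
  set δ : ℝ := Real.pi * Real.sqrt 3 - 4.8 with hδdef
  have hδ : (0.64:ℝ) ≤ δ := by simp only [hδdef]; linarith
  rcases eq_or_lt_of_le hu0 with h0 | hupos
  · -- u = 0 case
    have hz : ∀ k : ℕ, c (B + k) * u ^ (((B + k : ℕ) : ℝ) / (w : ℝ)) = 0 := by
      intro k
      rw [← h0, Real.zero_rpow (by positivity)]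
      ring
    rw [tsum_congr hz, tsum_zero, ← h0, Real.zero_rpow (by positivity)]
    simp
  · -- u > 0
    have hlogu : Real.log u ≤ -(Real.pi * Real.sqrt 3) := by
      calc Real.log u ≤ Real.log (Real.exp (-(Real.pi * Real.sqrt 3))) :=
            Real.log_le_log hupos hu
        _ = -(Real.pi * Real.sqrt 3) := Real.log_exp _
    set r : ℝ := Real.exp (-(δ / w)) with hrdef
    have hr0 : 0 < r := Real.exp_pos _
    have hr1 : r < 1 := by
      rw [hrdef, Real.exp_lt_one_iff]
      have : 0 < δ / w := by positivity
      linarith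
    set C : ℝ := ((5 * m : ℝ)) ^ (24 * m) * u ^ ((B : ℝ) / (w : ℝ)) with hCdef
    have hC0 : 0 ≤ C := by positivity
    -- key pointwise bound
    have key : ∀ k : ℕ, c (B + k) * u ^ (((B + k : ℕ) : ℝ) / (w : ℝ)) ≤ C * r ^ k := by
      intro k
      set n : ℕ := B + k with hndef
      have hn1 : 1 ≤ n := le_trans hB0 (Nat.le_add_right _ _)
      have hnw : (1:ℝ) ≤ (n:ℝ) / w := by
        rw [le_div_iff₀ hwpos]
        have : (w:ℝ) ≤ B := by
          have : w ≤ m * w := Nat.le_mul_of_pos_left w hm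
          exact_mod_cast le_trans this hB1
        have hkn : (B:ℝ) ≤ n := by exact_mod_cast Nat.le_add_right B k
        linarith
      have hcn : c n ≤ ((n:ℝ) / w) ^ (24 * m) := by
        have := hc n hn1
        rwa [max_eq_right (one_le_pow₀ hnw)] at this
      have hupow : u ^ (((n:ℕ):ℝ) / w) = Real.exp (Real.log u * ((n:ℝ)/w)) :=
        Real.rpow_def_of_pos hupos _
      -- main estimate
      have hrp0 : 0 ≤ u ^ (((n:ℕ):ℝ) / w) := by positivity
      have step : ((n:ℝ) / w) ^ (24 * m) * u ^ (((n:ℕ):ℝ) / w) ≤ C * r ^ k := by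
        rw [hupow]
        have hnB : (n:ℝ) = B + k := by push_cast [hndef]; ring
        have hsplit : Real.log u * ((n:ℝ)/w)
            = Real.log u * ((B:ℝ)/w) + Real.log u * ((k:ℝ)/w) := by
          rw [hnB]; ring
        set t : ℝ := (k:ℝ) / w with htdef
        have ht0 : 0 ≤ t := by positivity
        -- bound (n/w)^{24m} ≤ (5m)^{24m} exp(4.8 t)
        have h1 : (n:ℝ)/w ≤ 5*m + t := by
          rw [hnB, htdef]
          have : (B:ℝ) ≤ 5*m*w := by exact_mod_cast hB2
          rw [add_div]
          gcongr
          rw [div_le_iff₀ hwpos]; linarith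
        have h2 : (5*(m:ℝ) + t) ≤ 5*m * Real.exp (t / (5*m)) := by
          have := Real.add_one_le_exp (t / (5*m))
          have h5m : (0:ℝ) < 5*m := by positivity
          calc (5*(m:ℝ) + t) = 5*m * (t/(5*m) + 1) := by field_simp; ring
            _ ≤ 5*m * Real.exp (t / (5*m)) := by gcongr
        have h3 : ((n:ℝ)/w) ^ (24*m) ≤ (5*(m:ℝ))^(24*m) * Real.exp (4.8 * t) := by
          calc ((n:ℝ)/w) ^ (24*m) ≤ (5*(m:ℝ) * Real.exp (t / (5*m))) ^ (24*m) := by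
                gcongr
                · linarith
            _ = (5*(m:ℝ))^(24*m) * Real.exp (t / (5*m)) ^ (24*m) := mul_pow _ _ _
            _ = (5*(m:ℝ))^(24*m) * Real.exp ((24*m : ℕ) * (t / (5*m))) := by
                rw [← Real.exp_nat_mul]
            _ = (5*(m:ℝ))^(24*m) * Real.exp (4.8 * t) := by
                congr 1
                congr 1
                have hm0 : (m:ℝ) ≠ 0 := by positivity
                push_cast
                field_simp
                ring
        -- bound exp(log u * k/w) ≤ exp(-4.8 t) * exp(-δ/w)^k
        have h4 : Real.exp (Real.log u * t) ≤ Real.exp (-(4.8) * t) * r ^ k := by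
          have hrk : r ^ k = Real.exp (-(δ) * t) := by
            rw [hrdef, ← Real.exp_nat_mul, htdef]
            congr 1
            ring
          rw [hrk, ← Real.exp_add, Real.exp_le_exp]
          have : Real.log u * t ≤ -(Real.pi * Real.sqrt 3) * t := by
            rcases eq_or_lt_of_le ht0 with h | h
            · rw [← h]; simp
            · exact mul_le_mul_of_nonneg_right hlogu ht0
          have : -(Real.pi * Real.sqrt 3) * t = -(4.8) * t + -(δ) * t := by
            rw [hδdef]; ring
          linarith [mul_le_mul_of_nonneg_right hlogu ht0]
        calc ((n:ℝ)/w) ^ (24*m) * Real.exp (Real.log u * ((n:ℝ)/w))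
            = ((n:ℝ)/w) ^ (24*m) * Real.exp (Real.log u * t)
              * Real.exp (Real.log u * ((B:ℝ)/w)) := by
              rw [hsplit, Real.exp_add]; ring
          _ ≤ ((5*(m:ℝ))^(24*m) * Real.exp (4.8 * t)) * (Real.exp (-(4.8) * t) * r ^ k)
              * Real.exp (Real.log u * ((B:ℝ)/w)) := by
              have he1 : 0 ≤ Real.exp (Real.log u * ((B:ℝ)/w)) := (Real.exp_pos _).le
              have := mul_le_mul h3 h4 (Real.exp_pos _).le (by positivity)
              exact mul_le_mul_of_nonneg_right this he1
          _ = C * r ^ k := by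
              have hee : Real.exp (4.8*t) * Real.exp (-(4.8)*t) = 1 := by
                rw [← Real.exp_add, show (4.8:ℝ)*t + -(4.8)*t = 0 by ring, Real.exp_zero]
              rw [hCdef, Real.rpow_def_of_pos hupos]
              linear_combination ((5*(m:ℝ))^(24*m) * r^k
                * Real.exp (Real.log u * ((B:ℝ)/w))) * hee
      calc c n * u ^ (((n:ℕ):ℝ) / w) ≤ ((n:ℝ)/w)^(24*m) * u ^ (((n:ℕ):ℝ) / w) :=
            mul_le_mul_of_nonneg_right hcn hrp0
        _ ≤ C * r ^ k := step
    -- summability and tsum comparison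
    have hg : Summable (fun k : ℕ => C * r ^ k) :=
      (summable_geometric_of_lt_one hr0.le hr1).mul_left C
    have hf0 : ∀ k : ℕ, 0 ≤ c (B + k) * u ^ (((B + k : ℕ) : ℝ) / (w : ℝ)) := by
      intro k
      have : 0 ≤ c (B + k) := hc0 _ (le_trans hB0 (Nat.le_add_right _ _))
      positivity
    have hf : Summable (fun k : ℕ => c (B + k) * u ^ (((B + k : ℕ) : ℝ) / (w : ℝ))) :=
      Summable.of_nonneg_of_le hf0 key hg
    have h5 : (∑' k : ℕ, c (B + k) * u ^ (((B + k : ℕ) : ℝ) / (w : ℝ)))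
        ≤ ∑' k : ℕ, C * r ^ k := Summable.tsum_le_tsum key hf hg
    have h6 : (∑' k : ℕ, C * r ^ k) = C * (1 - r)⁻¹ := by
      rw [tsum_mul_left, tsum_geometric_of_lt_one hr0.le hr1]
    -- final numeric bound
    have h7 : (1 - r)⁻¹ ≤ 231.6 * w * (5 * m) := by
      have hrle : r ≤ w / (w + δ) := by
        have hh := Real.add_one_le_exp (δ / w)
        rw [hrdef, Real.exp_neg]
        calc (Real.exp (δ/w))⁻¹ ≤ (δ/w + 1)⁻¹ :=
              inv_anti₀ (by positivity) hh
          _ = w/(w+δ) := by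
              rw [div_add' _ _ _ (ne_of_gt hwpos), inv_div]
              ring_nf
      have h1r : δ / (w + δ) ≤ 1 - r := by
        have : w / (w + δ) + δ / (w + δ) = 1 := by
          field_simp
        linarith
      have hpos : (0:ℝ) < δ / (w + δ) := by positivity
      calc (1 - r)⁻¹ ≤ (δ / (w + δ))⁻¹ := by
            apply inv_anti₀ hpos h1r
        _ = (w + δ) / δ := by rw [inv_div]
        _ ≤ 231.6 * w * (5 * m) := by
            have hδ0 : (0:ℝ) < δ := lt_of_lt_of_le (by norm_num) hδ
            rw [div_le_iff₀ hδ0]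
            exact aux_numeric δ w m hδ hw1 hm1
    calc (∑' k : ℕ, c (B + k) * u ^ (((B + k : ℕ) : ℝ) / (w : ℝ)))
        ≤ C * (1 - r)⁻¹ := by rw [← h6]; exact h5
      _ ≤ C * (231.6 * w * (5 * m)) := mul_le_mul_of_nonneg_left h7 hC0
      _ = 231.6 * (w : ℝ) * u ^ ((B : ℝ) / (w : ℝ)) * ((5 * m : ℝ)) ^ (24 * m + 1) := by
          rw [hCdef, pow_succ]; ring
end

section
/- Let V₁, V₂ be finite-dimensional real normed vector spaces, α : V₁ → V₂ a linear map, M₁ ⊆ V₁ a lattice generated by elements of norm at most C, and suppose α(M₁) ⊆ M₂ for a lattice M₂ ⊆ V₂, every nonzero element of M₁ and M₂ has norm at least C^{-1}, and ‖α‖ ≤ C, where C ≥ 2. Set a = dim ker(α) and b = dim V₁. Then for each 0 ≤ i ≤ a−1, ker(α) contains i+1 linearly independent elements m₁,…,m_{i+1} of M₁ with max_j ‖m_j‖ ≤ (C³·b)^{b/(a−i)}. -/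
open MeasureTheory Metric Module
open scoped ENNReal

lemma sep_count {E : Type*} [NormedAddCommGroup E] [NormedSpace ℝ E] [FiniteDimensional ℝ E]
    (S : Finset E) (R δ : ℝ) (hδ : 0 < δ) (hR : 0 ≤ R)
    (hS : ∀ x ∈ S, ‖x‖ ≤ R)
    (hsep : ∀ x ∈ S, ∀ y ∈ S, x ≠ y → δ ≤ ‖x - y‖) :
    (S.card : ℝ) ≤ (2 * R / δ + 1) ^ (Module.finrank ℝ E) := by
  have hbase : (1:ℝ) ≤ 2 * R / δ + 1 := by
    have : 0 ≤ 2 * R / δ := by positivity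
    linarith
  rcases subsingleton_or_nontrivial E with hE | hE
  · have h1 : S.card ≤ 1 := Finset.card_le_one.2 (fun x _ y _ => Subsingleton.elim x y)
    calc (S.card:ℝ) ≤ 1 := by exact_mod_cast h1
    _ ≤ (2 * R / δ + 1) ^ (finrank ℝ E) := one_le_pow₀ hbase
  · borelize E
    obtain ⟨K₀⟩ : Nonempty (TopologicalSpace.PositiveCompacts E) :=
      TopologicalSpace.PositiveCompacts.nonempty'
    set μ := Measure.addHaarMeasure K₀ with hμ
    haveI : μ.IsAddHaarMeasure := Measure.isAddHaarMeasure_addHaarMeasure K₀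
    set n := finrank ℝ E with hn
    have hδ2 : (0:ℝ) < δ/2 := by linarith
    have hdisj : (S : Set E).PairwiseDisjoint (fun x => ball x (δ/2)) := by
      intro x hx y hy hxy
      apply ball_disjoint_ball
      have := hsep x hx y hy hxy
      rw [dist_eq_norm]; linarith
    have hsum : ∑ x ∈ S, μ (ball x (δ/2)) = μ (⋃ x ∈ S, ball x (δ/2)) :=
      (measure_biUnion_finset hdisj fun x _ => measurableSet_ball).symm
    have hsub : (⋃ x ∈ S, ball x (δ/2)) ⊆ ball 0 (R + δ/2) := by
      intro y hy
      simp only [Set.mem_iUnion] at hy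
      obtain ⟨x, hx, hyx⟩ := hy
      rw [mem_ball_iff_norm] at hyx
      rw [mem_ball, dist_zero_right]
      have h2 := hS x hx
      have h3 : ‖y‖ - ‖x‖ ≤ ‖y - x‖ := norm_sub_norm_le y x
      linarith
    have hball : ∀ x : E, μ (ball x (δ/2)) = ENNReal.ofReal ((δ/2) ^ n) * μ (ball 0 1) :=
      fun x => Measure.addHaar_ball μ x hδ2.le
    have hbig : μ (ball 0 (R + δ/2)) = ENNReal.ofReal ((R + δ/2) ^ n) * μ (ball 0 1) :=
      Measure.addHaar_ball μ 0 (by linarith)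
    have hkey : (S.card : ℝ≥0∞) * ENNReal.ofReal ((δ/2) ^ n) * μ (ball 0 1) ≤
        ENNReal.ofReal ((R + δ/2) ^ n) * μ (ball 0 1) := by
      rw [mul_assoc]
      calc (S.card : ℝ≥0∞) * (ENNReal.ofReal ((δ/2) ^ n) * μ (ball 0 1))
          = ∑ x ∈ S, μ (ball x (δ/2)) := by
            rw [Finset.sum_congr rfl (fun x _ => hball x), Finset.sum_const, nsmul_eq_mul]
        _ = μ (⋃ x ∈ S, ball x (δ/2)) := hsum
        _ ≤ μ (ball 0 (R + δ/2)) := measure_mono hsub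
        _ = _ := hbig
    have hpos : μ (ball (0:E) 1) ≠ 0 := (measure_ball_pos μ 0 one_pos).ne'
    have hfin : μ (ball (0:E) 1) ≠ ⊤ := measure_ball_lt_top.ne
    have hkey2 : (S.card : ℝ≥0∞) * ENNReal.ofReal ((δ/2) ^ n) ≤
        ENNReal.ofReal ((R + δ/2) ^ n) := (ENNReal.mul_le_mul_iff_left hpos hfin).1 hkey
    rw [← ENNReal.ofReal_natCast, ← ENNReal.ofReal_mul (by positivity)] at hkey2
    have hkey3 : (S.card : ℝ) * (δ/2)^n ≤ (R + δ/2)^n :=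
      (ENNReal.ofReal_le_ofReal_iff (by positivity)).1 hkey2
    have heq : (2 * R / δ + 1) = (R + δ/2) / (δ/2) := by field_simp
    rw [heq, div_pow, le_div_iff₀ (by positivity)]
    exact hkey3


lemma sep_count_submodule {E : Type*} [NormedAddCommGroup E] [NormedSpace ℝ E]
    [FiniteDimensional ℝ E] (W : Submodule ℝ E)
    (S : Finset E) (R δ : ℝ) (hδ : 0 < δ) (hR : 0 ≤ R)
    (hW : ∀ x ∈ S, x ∈ W)
    (hS : ∀ x ∈ S, ‖x‖ ≤ R)
    (hsep : ∀ x ∈ S, ∀ y ∈ S, x ≠ y → δ ≤ ‖x - y‖) :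
    (S.card : ℝ) ≤ (2 * R / δ + 1) ^ (Module.finrank ℝ W) := by
  classical
  set T : Finset W := S.attach.image (fun x => (⟨x.1, hW x.1 x.2⟩ : W)) with hT
  have hinj : Function.Injective (fun x : {y // y ∈ S} => (⟨x.1, hW x.1 x.2⟩ : W)) := by
    intro u v huv
    simp only [Subtype.mk.injEq] at huv
    exact Subtype.ext huv
  have hcard : T.card = S.card := by
    rw [hT, Finset.card_image_of_injective _ hinj, Finset.card_attach]
  rw [← hcard]
  apply sep_count T R δ hδ hR
  · intro x hx
    rw [hT, Finset.mem_image] at hx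
    obtain ⟨u, _, rfl⟩ := hx
    exact hS u.1 u.2
  · intro x hx y hy hxy
    rw [hT, Finset.mem_image] at hx hy
    obtain ⟨u, _, rfl⟩ := hx
    obtain ⟨v, _, rfl⟩ := hy
    have : (u:E) ≠ (v:E) := by
      intro h
      exact hxy (by simp [Subtype.ext h])
    have := hsep u.1 u.2 v.1 v.2 this
    simpa using this


lemma fact_bound : ∀ b : ℕ, 1 ≤ b → (2:ℝ)^b * (Nat.factorial b : ℝ) ≤ 4 * (b:ℝ)^b := by
  intro b
  induction b with
  | zero => intro h; omega
  | succ n ih =>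
    intro _
    rcases Nat.eq_or_lt_of_le (Nat.one_le_iff_ne_zero.mpr (by omega) : 1 ≤ n+1) with h | h
    · simp [← h]; norm_num [Nat.factorial]
    · have hn : 1 ≤ n := by omega
      have hn0 : (0:ℝ) < n := by exact_mod_cast hn
      have key : 2 * (n:ℝ)^n ≤ ((n:ℝ)+1)^n := by
        have hpos : (0:ℝ) ≤ 1/(n:ℝ) := by positivity
        have hber : 1 + (n:ℕ) * (1/(n:ℝ)) ≤ (1 + 1/(n:ℝ))^n :=
          one_add_mul_le_pow (by linarith) n
        have h2 : (2:ℝ) ≤ (1 + 1/(n:ℝ))^n := by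
          have heq : (n:ℕ) * (1/(n:ℝ)) = 1 := by field_simp
          rw [heq] at hber; linarith
        calc 2 * (n:ℝ)^n ≤ (1 + 1/(n:ℝ))^n * (n:ℝ)^n := by
              apply mul_le_mul_of_nonneg_right h2 (by positivity)
          _ = ((1 + 1/(n:ℝ)) * n)^n := (mul_pow _ _ _).symm
          _ = ((n:ℝ)+1)^n := by congr 1; field_simp
      have ihn := ih hn
      have heq2 : (2:ℝ)^(n+1) * (Nat.factorial (n+1) : ℝ)
          = 2 * ((n:ℝ)+1) * ((2:ℝ)^n * (Nat.factorial n : ℝ)) := by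
        push_cast [Nat.factorial_succ, pow_succ]; ring
      rw [heq2]
      calc 2 * ((n:ℝ)+1) * ((2:ℝ)^n * (Nat.factorial n : ℝ))
          ≤ 2 * ((n:ℝ)+1) * (4 * (n:ℝ)^n) := by
            apply mul_le_mul_of_nonneg_left ihn (by positivity)
        _ = 4 * ((n:ℝ)+1) * (2 * (n:ℝ)^n) := by ring
        _ ≤ 4 * ((n:ℝ)+1) * ((n:ℝ)+1)^n := by
            apply mul_le_mul_of_nonneg_left key (by positivity)
        _ = 4 * (((n:ℕ)+1 : ℕ):ℝ)^(n+1) := by push_cast; ring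


lemma numeric_contra (C : ℝ) (hC : 2 ≤ C) (a b i d m : ℕ)
    (hia : i < a) (hd : d + a = b)
    (hcount : ((m:ℝ)+1)^b ≤ (Nat.factorial b : ℝ) * (2*(m:ℝ)*C^3+1)^d * (4*(m:ℝ)*C^2+1)^i)
    (hm2 : (C^3*(b:ℝ)) ^ ((b:ℝ)/((a:ℝ)-(i:ℝ))) / (2*C) < (m:ℝ)+1) : False := by
  have hC0 : (0:ℝ) < C := by linarith
  have hb1 : 1 ≤ b := by omega
  have hb0 : (0:ℝ) < b := by exact_mod_cast Nat.lt_of_lt_of_le Nat.zero_lt_one hb1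
  obtain ⟨r, hr⟩ : ∃ r, a = i + r ∧ 1 ≤ r := ⟨a - i, by omega, by omega⟩
  obtain ⟨hr1, hr2⟩ := hr
  have hbd : b = d + i + r := by omega
  have hm0 : (0:ℝ) ≤ (m:ℝ) := Nat.cast_nonneg m
  have hm1 : (0:ℝ) < (m:ℝ)+1 := by linarith
  have hC3 : (1:ℝ) ≤ C^3 := one_le_pow₀ (by linarith)
  have hC2 : (1:ℝ) ≤ C^2 := one_le_pow₀ (by linarith)
  -- Step: absorb +1
  have h1 : (2*(m:ℝ)*C^3+1) ≤ 2*((m:ℝ)+1)*C^3 := by nlinarith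
  have h2 : (4*(m:ℝ)*C^2+1) ≤ 4*((m:ℝ)+1)*C^2 := by nlinarith
  set B : ℝ := (Nat.factorial b : ℝ) * 2^d * 4^i * C^(3*d+2*i) with hB
  have hfac0 : (0:ℝ) < (Nat.factorial b : ℝ) := by exact_mod_cast Nat.factorial_pos b
  have h3 : ((m:ℝ)+1)^b ≤ B * ((m:ℝ)+1)^(d+i) := by
    calc ((m:ℝ)+1)^b ≤ (Nat.factorial b : ℝ) * (2*(m:ℝ)*C^3+1)^d * (4*(m:ℝ)*C^2+1)^i := hcount
      _ ≤ (Nat.factorial b : ℝ) * (2*((m:ℝ)+1)*C^3)^d * (4*((m:ℝ)+1)*C^2)^i := by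
          gcongr <;> positivity
      _ = B * ((m:ℝ)+1)^(d+i) := by
          rw [hB]
          rw [mul_pow, mul_pow, mul_pow, mul_pow, pow_add, pow_add]
          ring
  have h4 : ((m:ℝ)+1)^r ≤ B := by
    have hpow : (0:ℝ) < ((m:ℝ)+1)^(d+i) := by positivity
    have : ((m:ℝ)+1)^r * ((m:ℝ)+1)^(d+i) ≤ B * ((m:ℝ)+1)^(d+i) := by
      rw [← pow_add]
      have : r + (d+i) = b := by omega
      rw [this]; exact h3
    exact le_of_mul_le_mul_right this hpow
  -- X and its r-th power
  set X : ℝ := (C^3*(b:ℝ)) ^ ((b:ℝ)/((a:ℝ)-(i:ℝ))) with hX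
  have hCb0 : (0:ℝ) < C^3*(b:ℝ) := by positivity
  have hai : (a:ℝ)-(i:ℝ) = (r:ℝ) := by
    have : (a:ℝ) = (i:ℝ) + (r:ℝ) := by exact_mod_cast congrArg (Nat.cast : ℕ → ℝ) hr1
    linarith
  have hr0 : (r:ℝ) ≠ 0 := Nat.cast_ne_zero.mpr (by omega)
  have hXr : X^r = (C^3*(b:ℝ))^b := by
    rw [hX, hai, ← Real.rpow_natCast ((C^3*(b:ℝ)) ^ ((b:ℝ)/(r:ℝ))) r,
      ← Real.rpow_mul hCb0.le, div_mul_cancel₀ _ hr0, Real.rpow_natCast]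
  have h5 : B * (2*C)^r ≤ (C^3*(b:ℝ))^b := by
    have e0 : B * (2*C)^r = (Nat.factorial b : ℝ) * 2^(d+2*i+r) * C^(3*d+2*i+r) := by
      rw [hB, mul_pow]
      rw [show (4:ℝ)^i = (2:ℝ)^(2*i) by rw [pow_mul]; norm_num]
      rw [pow_add, pow_add, pow_add, pow_add]
      ring
    have e1 : (C^3*(b:ℝ))^b = C^(3*d+2*i+r) * (C^(i+2*r) * (b:ℝ)^b) := by
      rw [mul_pow, ← pow_mul, show 3*b = (3*d+2*i+r) + (i+2*r) by omega, pow_add]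
      ring
    rw [e0, e1]
    have hC' : (0:ℝ) < C^(3*d+2*i+r) := by positivity
    rw [show (Nat.factorial b : ℝ) * 2^(d+2*i+r) * C^(3*d+2*i+r)
        = C^(3*d+2*i+r) * ((Nat.factorial b : ℝ) * 2^(d+2*i+r)) by ring]
    apply mul_le_mul_of_nonneg_left _ hC'.le
    have e2 : d+2*i+r = b+i := by omega
    have key : (Nat.factorial b : ℝ) * 2^(d+2*i+r) ≤ 2^(i+2) * (b:ℝ)^b := by
      rw [e2, pow_add]
      calc (Nat.factorial b : ℝ) * (2^b * 2^i) = 2^i * (2^b * (Nat.factorial b : ℝ)) := by ring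
        _ ≤ 2^i * (4 * (b:ℝ)^b) := by
            apply mul_le_mul_of_nonneg_left (fact_bound b hb1) (by positivity)
        _ = 2^(i+2) * (b:ℝ)^b := by rw [pow_add]; norm_num; ring
    calc (Nat.factorial b : ℝ) * 2^(d+2*i+r) ≤ 2^(i+2) * (b:ℝ)^b := key
      _ ≤ 2^(i+2*r) * (b:ℝ)^b := by
          apply mul_le_mul_of_nonneg_right _ (by positivity)
          apply pow_le_pow_right₀ (by norm_num) (by omega)
      _ ≤ C^(i+2*r) * (b:ℝ)^b := by
          apply mul_le_mul_of_nonneg_right _ (by positivity)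
          apply pow_le_pow_left₀ (by norm_num) hC
  have h6 : B ≤ (X/(2*C))^r := by
    rw [div_pow, le_div_iff₀ (by positivity)]
    rw [hXr]; exact h5
  have h7 : (X/(2*C))^r < ((m:ℝ)+1)^r :=
    pow_lt_pow_left₀ hm2 (by positivity) (by omega)
  linarith


section simplex
variable {b m : ℕ}

/-- padded monotone extension of `f` to `ℕ`, with value `0` at `0`. -/
def gpad (f : Fin b → Fin (m+1)) : ℕ → ℕ := fun k =>
  if h : k = 0 ∨ b = 0 then 0 else (f ⟨min (k-1) (b-1), by omega⟩ : ℕ)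

lemma gpad_zero (f : Fin b → Fin (m+1)) : gpad f 0 = 0 := by simp [gpad]

lemma gpad_succ (f : Fin b → Fin (m+1)) (j : Fin b) : gpad f ((j:ℕ)+1) = f j := by
  have hb : b ≠ 0 := by rintro rfl; exact absurd j.2 (by omega)
  have h1 : min (j:ℕ) (b-1) = (j:ℕ) := by have := j.2; omega
  simp only [gpad, Nat.add_sub_cancel]
  rw [dif_neg (by omega)]
  congr 1
  exact Fin.ext (by simp [h1])

lemma gpad_mono (f : Fin b → Fin (m+1)) (hf : Monotone f) : Monotone (gpad f) := by
  intro k l hkl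
  by_cases hk : k = 0 ∨ b = 0
  · rcases hk with hk | hk
    · simp [gpad, hk]
    · simp [gpad, hk]
  · have hl : ¬ (l = 0 ∨ b = 0) := by
      rw [not_or] at hk ⊢
      omega
    simp only [gpad, dif_neg hk, dif_neg hl]
    have hmono := hf (a := ⟨min (k-1) (b-1), by omega⟩) (b := ⟨min (l-1) (b-1), by omega⟩)
      (by simp [Fin.le_def]; omega)
    exact_mod_cast hmono

lemma gpad_le (f : Fin b → Fin (m+1)) (k : ℕ) : gpad f k ≤ m := by
  by_cases h : k = 0 ∨ b = 0
  · simp [gpad, h]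
  · simp only [gpad, dif_neg h]
    exact Nat.lt_succ_iff.mp (f _).2

/-- the difference vector -/
def dvec (f : Fin b → Fin (m+1)) : ℕ → ℕ := fun t => gpad f (t+1) - gpad f t

lemma sum_dvec_le (f : Fin b → Fin (m+1)) (hf : Monotone f) :
    ∑ t ∈ Finset.range b, dvec f t ≤ m := by
  have h := Finset.sum_range_tsub (f := gpad f) (gpad_mono f hf) b
  simp only [dvec]
  rw [h, gpad_zero]
  simpa using gpad_le f b

lemma dvec_partial (f : Fin b → Fin (m+1)) (hf : Monotone f) (j : Fin b) :
    ∑ t ∈ Finset.range ((j:ℕ)+1), dvec f t = (f j : ℕ) := by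
  have h := Finset.sum_range_tsub (f := gpad f) (gpad_mono f hf) ((j:ℕ)+1)
  simp only [dvec]
  rw [h, gpad_zero, gpad_succ]
  omega

lemma dvec_inj (f f' : Fin b → Fin (m+1)) (hf : Monotone f) (hf' : Monotone f')
    (h : ∀ j : Fin b, dvec f (j:ℕ) = dvec f' (j:ℕ)) : f = f' := by
  funext j
  have h1 := dvec_partial f hf j
  have h2 := dvec_partial f' hf' j
  have h3 : ∑ t ∈ Finset.range ((j:ℕ)+1), dvec f t = ∑ t ∈ Finset.range ((j:ℕ)+1), dvec f' t := by
    apply Finset.sum_congr rfl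
    intro t ht
    rw [Finset.mem_range] at ht
    have htb : t < b := by have := j.2; omega
    exact h ⟨t, htb⟩
  have : (f j : ℕ) = (f' j : ℕ) := by rw [← h1, h3, h2]
  exact Fin.ext this

end simplex

lemma count_lower {X : Type*} [DecidableEq X] (b m : ℕ)
    (v : (Fin b → Fin (m+1)) → X)
    (hv : ∀ f f' : Fin b → Fin (m+1), Monotone f → Monotone f' → v f = v f' → f = f') :
    (m+1)^b ≤ (Finset.image (fun f => v (f ∘ Tuple.sort f)) Finset.univ).card
      * Nat.factorial b := by
  classical
  set P := Finset.image (fun f => v (f ∘ Tuple.sort f)) Finset.univ with hP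
  have key : Fintype.card (Fin b → Fin (m+1)) ≤ P.card * Fintype.card (Equiv.Perm (Fin b)) := by
    rw [← Finset.card_univ (α := Equiv.Perm (Fin b)), ← Finset.card_product, ← Finset.card_univ]
    apply Finset.card_le_card_of_injOn (fun f => (v (f ∘ Tuple.sort f), Tuple.sort f))
    · intro f _
      rw [Finset.mem_coe, Finset.mem_product]
      refine ⟨?_, Finset.mem_univ _⟩
      rw [hP, Finset.mem_image]
      exact ⟨f, Finset.mem_univ f, rfl⟩
    · intro f _ f' _ h
      rw [Prod.mk.injEq] at h
      obtain ⟨h1, h2⟩ := h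
      have h3 : f ∘ Tuple.sort f = f' ∘ Tuple.sort f' :=
        hv _ _ (Tuple.monotone_sort f) (Tuple.monotone_sort f') h1
      funext j
      have := congrFun h3 ((Tuple.sort f)⁻¹ j)
      simp only [Function.comp_apply] at this
      rw [Equiv.Perm.inv_def, Equiv.apply_symm_apply] at this
      rw [this, ← h2, Equiv.apply_symm_apply]
  rw [Fintype.card_fun, Fintype.card_fin, Fintype.card_fin, Fintype.card_perm,
    Fintype.card_fin] at key
  exact key


/-- Faltings's version of Siegel's lemma.  Let `V₁, V₂` be finite-dimensional real
normed vector spaces, `α : V₁ → V₂` a linear map of norm at most `C`, `M₁ ⊆ V₁` a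
lattice generated by elements of norm at most `C` with `α(M₁) ⊆ M₂` for a lattice
`M₂ ⊆ V₂`, and suppose every nonzero element of `M₁` and `M₂` has norm at least
`C⁻¹`, where `C ≥ 2`.  With `a = dim ker α` and `b = dim V₁`, for each
`0 ≤ i ≤ a-1` the kernel of `α` contains `i+1` linearly independent elements of
`M₁` of norm at most `(C³ b)^{b/(a-i)}`. -/
theorem siegel_faltings
    (V₁ V₂ : Type*) [NormedAddCommGroup V₁] [NormedSpace ℝ V₁] [FiniteDimensional ℝ V₁]
    [NormedAddCommGroup V₂] [NormedSpace ℝ V₂] [FiniteDimensional ℝ V₂]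
    (α : V₁ →ₗ[ℝ] V₂)
    (M₁ : Submodule ℤ V₁) [DiscreteTopology M₁] [IsZLattice ℝ M₁]
    (M₂ : Submodule ℤ V₂) [DiscreteTopology M₂] [IsZLattice ℝ M₂]
    (C : ℝ) (hC : 2 ≤ C)
    (hgen : ∃ s : Set V₁, s ⊆ (M₁ : Set V₁) ∧ Submodule.span ℤ s = M₁ ∧
      ∀ x ∈ s, ‖x‖ ≤ C)
    (hmap : ∀ x ∈ M₁, α x ∈ M₂)
    (hM₁ : ∀ x ∈ M₁, x ≠ 0 → C⁻¹ ≤ ‖x‖)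
    (hM₂ : ∀ y ∈ M₂, y ≠ 0 → C⁻¹ ≤ ‖y‖)
    (hα : ∀ v : V₁, ‖α v‖ ≤ C * ‖v‖)
    (a b : ℕ) (ha : a = Module.finrank ℝ (LinearMap.ker α))
    (hb : b = Module.finrank ℝ V₁)
    (i : ℕ) (hi : i < a) :
    ∃ mvec : Fin (i + 1) → V₁,
      (∀ j, mvec j ∈ M₁) ∧ (∀ j, mvec j ∈ LinearMap.ker α) ∧
      LinearIndependent ℝ mvec ∧
      ∀ j, ‖mvec j‖ ≤ (C ^ 3 * (b : ℝ)) ^ ((b : ℝ) / ((a : ℝ) - (i : ℝ))) := by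
  classical
  obtain ⟨s, hsM, hsspan, hsnorm⟩ := hgen
  have hC0 : (0:ℝ) < C := by linarith
  have hC1 : (1:ℝ) ≤ C := by linarith
  have hab : a ≤ b := by rw [ha, hb]; exact Submodule.finrank_le _
  have hb1 : 1 ≤ b := by omega
  set N : ℝ := (C ^ 3 * (b : ℝ)) ^ ((b : ℝ) / ((a : ℝ) - (i : ℝ))) with hN
  have hbR : (0:ℝ) < b := by exact_mod_cast hb1
  have hN0 : 0 < N := Real.rpow_pos_of_pos (by positivity) _
  set S : Set V₁ := {x | x ∈ M₁ ∧ α x = 0 ∧ ‖x‖ ≤ N} with hS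
  set W : Submodule ℝ V₁ := Submodule.span ℝ S with hW
  by_cases hdim : i + 1 ≤ Module.finrank ℝ W
  · -- extraction case
    obtain ⟨t, hts, htspan, htind⟩ := exists_linearIndependent ℝ S
    have htfin : t.Finite := htind.setFinite
    haveI := htfin.fintype
    have htcard : i + 1 ≤ t.toFinset.card := by
      rw [← finrank_span_set_eq_card htind]
      · rw [htspan, ← hW]; exact hdim
    obtain ⟨u, hut, hucard⟩ := Finset.exists_subset_card_eq htcard
    set e' : ↥u ≃ Fin (i+1) := u.equivFinOfCardEq hucard with he'
    have humem : ∀ z : ↥u, (z : V₁) ∈ t := by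
      intro z
      have := hut z.2
      rwa [Set.mem_toFinset] at this
    set φ : Fin (i+1) → t := fun j => ⟨(e'.symm j : V₁), humem (e'.symm j)⟩ with hφ
    have hφinj : Function.Injective φ := by
      intro j k hjk
      rw [hφ] at hjk
      simp only [Subtype.mk.injEq] at hjk
      exact e'.symm.injective (Subtype.ext hjk)
    refine ⟨fun j => (φ j : V₁), ?_, ?_, ?_, ?_⟩
    · intro j; exact (hts (φ j).2).1
    · intro j; exact LinearMap.mem_ker.mpr (hts (φ j).2).2.1
    · exact htind.comp φ hφinj
    · intro j; exact (hts (φ j).2).2.2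
  · -- counting case
    exfalso
    push_neg at hdim
    have hWi : finrank ℝ W ≤ i := by omega
    -- a full system of small generators
    have hsspanR : Submodule.span ℝ s = ⊤ := by
      have h1 : Submodule.span ℝ (M₁ : Set V₁) = ⊤ :=
        (inferInstance : IsZLattice ℝ M₁).span_top
      rw [← hsspan] at h1
      rwa [Submodule.span_span_of_tower] at h1
    obtain ⟨t, hts, htspan, htind⟩ := exists_linearIndependent ℝ s
    have htfin : t.Finite := htind.setFinite
    haveI := htfin.fintype
    have htcard : t.toFinset.card = b := by
      rw [← finrank_span_set_eq_card htind, htspan, hsspanR, finrank_top, hb]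
    set e : ↥t ≃ Fin b := by
      apply Fintype.equivFinOfCardEq
      rwa [← Set.toFinset_card]
    set x : Fin b → V₁ := fun j => (e.symm j : V₁) with hx
    have hxind : LinearIndependent ℝ x := htind.comp e.symm e.symm.injective
    have hxs : ∀ j, x j ∈ s := fun j => hts (e.symm j).2
    have hxM : ∀ j, x j ∈ M₁ := fun j => hsM (hxs j)
    have hxC : ∀ j, ‖x j‖ ≤ C := fun j => hsnorm _ (hxs j)
    set m : ℕ := ⌊N/(2*C)⌋₊ with hm
    have hm1 : (m:ℝ) ≤ N/(2*C) := Nat.floor_le (by positivity)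
    have hm2 : N/(2*C) < (m:ℝ)+1 := by exact_mod_cast Nat.lt_floor_add_one (N/(2*C))
    set v : (Fin b → Fin (m+1)) → V₁ := fun f => ∑ j : Fin b, dvec f (j:ℕ) • x j with hv
    have hvinj : ∀ f f' : Fin b → Fin (m+1), Monotone f → Monotone f' → v f = v f' → f = f' := by
      intro f f' hf hf' hveq
      apply dvec_inj f f' hf hf'
      intro j
      have hzero : ∑ k : Fin b, ((dvec f (k:ℕ) : ℝ) - (dvec f' (k:ℕ) : ℝ)) • x k = 0 := by
        have : ∀ (g : Fin b → Fin (m+1)), ∑ k : Fin b, ((dvec g (k:ℕ) : ℝ)) • x k = v g := by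
          intro g
          rw [hv]
          apply Finset.sum_congr rfl
          intro k _
          rw [Nat.cast_smul_eq_nsmul]
        simp only [sub_smul]
        rw [Finset.sum_sub_distrib, this f, this f', hveq, sub_self]
      have := Fintype.linearIndependent_iff.mp hxind _ hzero j
      have := sub_eq_zero.mp this
      exact_mod_cast this
    set P : Finset V₁ := Finset.image (fun f => v (f ∘ Tuple.sort f)) Finset.univ with hP
    have hcount1 : (m+1)^b ≤ P.card * Nat.factorial b := count_lower b m v hvinj
    have hPmem : ∀ p ∈ P, p ∈ M₁ ∧ ‖p‖ ≤ (m:ℝ)*C := by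
      intro p hp
      rw [hP, Finset.mem_image] at hp
      obtain ⟨f, _, rfl⟩ := hp
      set h := f ∘ Tuple.sort f with hh
      have hmono : Monotone h := Tuple.monotone_sort f
      constructor
      · apply Submodule.sum_mem
        intro j _
        rw [← natCast_zsmul]
        exact Submodule.smul_mem _ _ (hxM j)
      · calc ‖∑ j : Fin b, dvec h (j:ℕ) • x j‖ ≤ ∑ j : Fin b, ‖dvec h (j:ℕ) • x j‖ :=
              norm_sum_le _ _
          _ ≤ ∑ j : Fin b, (dvec h (j:ℕ) : ℝ) * C := by
              apply Finset.sum_le_sum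
              intro j _
              calc ‖dvec h (j:ℕ) • x j‖ ≤ (dvec h (j:ℕ) : ℝ) * ‖x j‖ := by
                    rw [← Nat.cast_smul_eq_nsmul ℝ, norm_smul]
                    simp [abs_of_nonneg]
                _ ≤ (dvec h (j:ℕ) : ℝ) * C := by
                    apply mul_le_mul_of_nonneg_left (hxC j) (by positivity)
          _ = ((∑ j ∈ Finset.range b, dvec h j : ℕ) : ℝ) * C := by
              rw [← Finset.sum_mul]
              congr 1
              rw [← Fin.sum_univ_eq_sum_range]
              push_cast; rfl
          _ ≤ (m:ℝ)*C := by
              apply mul_le_mul_of_nonneg_right _ hC0.le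
              exact_mod_cast sum_dvec_le h hmono
    have hsep₁ : ∀ p q : V₁, p ∈ M₁ → q ∈ M₁ → p ≠ q → C⁻¹ ≤ ‖p - q‖ := by
      intro p q hp hq hpq
      exact hM₁ (p - q) (Submodule.sub_mem _ hp hq) (sub_ne_zero.mpr hpq)
    set Q : Finset V₂ := P.image ⇑α with hQ
    set d : ℕ := finrank ℝ (LinearMap.range α) with hd
    have hda : d + a = b := by
      rw [hd, ha, hb]; exact LinearMap.finrank_range_add_finrank_ker α
    have hQcard : (Q.card : ℝ) ≤ (2*(m:ℝ)*C^3+1)^d := by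
      have hkey := sep_count_submodule (LinearMap.range α) Q (C*((m:ℝ)*C)) C⁻¹
        (by positivity) (by positivity) ?_ ?_ ?_
      · have heq : 2 * (C*((m:ℝ)*C)) / C⁻¹ + 1 = 2*(m:ℝ)*C^3+1 := by
          field_simp
        rwa [heq] at hkey
      · intro y hy
        rw [hQ, Finset.mem_image] at hy
        obtain ⟨p, _, rfl⟩ := hy
        exact LinearMap.mem_range_self α p
      · intro y hy
        rw [hQ, Finset.mem_image] at hy
        obtain ⟨p, hp, rfl⟩ := hy
        calc ‖α p‖ ≤ C * ‖p‖ := hα p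
          _ ≤ C * ((m:ℝ)*C) := by
              apply mul_le_mul_of_nonneg_left (hPmem p hp).2 hC0.le
      · intro y hy y' hy' hne
        rw [hQ, Finset.mem_image] at hy hy'
        obtain ⟨p, hp, rfl⟩ := hy
        obtain ⟨q, hq, rfl⟩ := hy'
        have hsub : α p - α q = α (p - q) := (map_sub α p q).symm
        rw [hsub]
        apply hM₂
        · exact hmap _ (Submodule.sub_mem _ (hPmem p hp).1 (hPmem q hq).1)
        · rw [← hsub]; exact sub_ne_zero.mpr hne
    have hfiber : ∀ y ∈ Q, ((P.filter (fun p => α p = y)).card : ℝ) ≤ (4*(m:ℝ)*C^2+1)^i := by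
      intro y hy
      set F := P.filter (fun p => α p = y) with hF
      rcases F.eq_empty_or_nonempty with hFe | ⟨p₀, hp₀⟩
      · rw [hFe]; simp; positivity
      · have hp₀P : p₀ ∈ P := Finset.mem_of_mem_filter p₀ hp₀
        have hp₀y : α p₀ = y := (Finset.mem_filter.mp hp₀).2
        set F' := F.image (fun p => p - p₀) with hF'
        have hcard' : F'.card = F.card := by
          apply Finset.card_image_of_injective
          intro u v' huv
          simpa using congrArg (· + p₀) huv
        have hmemW : ∀ z ∈ F', z ∈ W := by
          intro z hz
          rw [hF', Finset.mem_image] at hz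
          obtain ⟨q, hq, rfl⟩ := hz
          have hqP : q ∈ P := Finset.mem_of_mem_filter q hq
          have hqy : α q = y := (Finset.mem_filter.mp hq).2
          apply Submodule.subset_span
          refine ⟨Submodule.sub_mem _ (hPmem q hqP).1 (hPmem p₀ hp₀P).1, ?_, ?_⟩
          · rw [map_sub, hqy, hp₀y, sub_self]
          · calc ‖q - p₀‖ ≤ ‖q‖ + ‖p₀‖ := norm_sub_le _ _
              _ ≤ (m:ℝ)*C + (m:ℝ)*C := add_le_add (hPmem q hqP).2 (hPmem p₀ hp₀P).2
              _ ≤ N := by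
                  have h2m := (le_div_iff₀ (by positivity : (0:ℝ) < 2*C)).mp hm1
                  linarith
        have hnorm' : ∀ z ∈ F', ‖z‖ ≤ 2*(m:ℝ)*C := by
          intro z hz
          rw [hF', Finset.mem_image] at hz
          obtain ⟨q, hq, rfl⟩ := hz
          have hqP : q ∈ P := Finset.mem_of_mem_filter q hq
          calc ‖q - p₀‖ ≤ ‖q‖ + ‖p₀‖ := norm_sub_le _ _
            _ ≤ (m:ℝ)*C + (m:ℝ)*C := add_le_add (hPmem q hqP).2 (hPmem p₀ hp₀P).2
            _ = 2*(m:ℝ)*C := by ring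
        have hsep' : ∀ z ∈ F', ∀ z' ∈ F', z ≠ z' → C⁻¹ ≤ ‖z - z'‖ := by
          intro z hz z' hz' hne
          rw [hF', Finset.mem_image] at hz hz'
          obtain ⟨q, hq, rfl⟩ := hz
          obtain ⟨q', hq', rfl⟩ := hz'
          rw [sub_sub_sub_cancel_right]
          apply hsep₁
          · exact (hPmem q (Finset.mem_of_mem_filter q hq)).1
          · exact (hPmem q' (Finset.mem_of_mem_filter q' hq')).1
          · intro hqq'
            exact hne (by rw [hqq'])
        have hkey := sep_count_submodule W F' (2*(m:ℝ)*C) C⁻¹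
          (by positivity) (by positivity) hmemW hnorm' hsep'
        have heq : 2*(2*(m:ℝ)*C)/C⁻¹+1 = 4*(m:ℝ)*C^2+1 := by
          field_simp; ring
        rw [heq] at hkey
        have hbase : (1:ℝ) ≤ 4*(m:ℝ)*C^2+1 := by
          have : (0:ℝ) ≤ 4*(m:ℝ)*C^2 := by positivity
          linarith
        calc ((F.card:ℕ):ℝ) = (F'.card:ℝ) := by rw [hcard']
          _ ≤ (4*(m:ℝ)*C^2+1)^(finrank ℝ W) := hkey
          _ ≤ (4*(m:ℝ)*C^2+1)^i := pow_le_pow_right₀ hbase hWi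
    have hPQ : (P.card : ℝ) ≤ (Q.card : ℝ) * (4*(m:ℝ)*C^2+1)^i := by
      have hsplit := Finset.card_eq_sum_card_image (⇑α) P
      calc (P.card:ℝ) = ∑ y ∈ Q, ((P.filter (fun p => α p = y)).card : ℝ) := by
            rw [hQ]
            exact_mod_cast congrArg (Nat.cast : ℕ → ℝ) hsplit
        _ ≤ ∑ y ∈ Q, (4*(m:ℝ)*C^2+1)^i := Finset.sum_le_sum hfiber
        _ = (Q.card:ℝ) * (4*(m:ℝ)*C^2+1)^i := by
            rw [Finset.sum_const, nsmul_eq_mul]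
    apply numeric_contra C hC a b i d m hi hda
    · calc ((m:ℝ)+1)^b = (((m+1)^b : ℕ) : ℝ) := by push_cast; ring
        _ ≤ ((P.card * Nat.factorial b : ℕ) : ℝ) := by exact_mod_cast hcount1
        _ = (P.card : ℝ) * (Nat.factorial b : ℝ) := by push_cast; ring
        _ ≤ ((Q.card : ℝ) * (4*(m:ℝ)*C^2+1)^i) * (Nat.factorial b:ℝ) := by
            apply mul_le_mul_of_nonneg_right hPQ (by positivity)
        _ ≤ (((2*(m:ℝ)*C^3+1)^d) * (4*(m:ℝ)*C^2+1)^i) * (Nat.factorial b:ℝ) := by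
            apply mul_le_mul_of_nonneg_right _ (by positivity)
            apply mul_le_mul_of_nonneg_right hQcard (by positivity)
        _ = (Nat.factorial b:ℝ) * (2*(m:ℝ)*C^3+1)^d * (4*(m:ℝ)*C^2+1)^i := by ring
    · rw [hN] at hm2
      exact hm2
end
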